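/- Let ((E, λ), T, k, t) be a Threshold Adjustment instance over d features. Construct an instance ((E′, λ′), T′, k, t) as follows: for each feature i ∈ {1, …, d}, if i occurs at exactly the cuts v_1, …, v_m of T, introduce m fresh features i_1, …, i_m; every example e of E is extended to an example e′ with e′[i_j] = e[i] for every fresh feature i_j (values on old features and labels unchanged), and T′ is obtained from T by replacing feat(v_j) with i_j for every such cut v_j. Then every feature occurs at most once as the feature of a cut of T′, and ((E, λ), T, k, t) is a yes-instance of Threshold Adjustment if and only if ((E′, λ′), T′, k, t) is a yes-instance of Threshold Adjustment. -/
import Mathlib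


/-- Decision trees with features of type `α`: each leaf carries a class label
(`true` = blue, `false` = red), each internal node (a *cut*) carries a feature
and a real threshold. -/
inductive DTree (α : Type) : Type
  | leaf (label : Bool) : DTree α
  | node (feat : α) (thr : ℝ) (left right : DTree α) : DTree α

namespace DTree

/-- The class that the tree assigns to the example `e`. -/
noncomputable def classify {α : Type} : DTree α → (α → ℝ) → Bool
  | leaf c, _ => c
  | node f x l r, e => if e f ≤ x then l.classify e else r.classify e

/-- The feature of the cut at position `p` (positions are paths from the root,
`false` = left child, `true` = right child). -/
def featAt {α : Type} : DTree α → List Bool → Option α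
  | node f _ _ _, [] => some f
  | node _ _ l r, b :: q => if b then r.featAt q else l.featAt q
  | leaf _, _ => none

/-- The list of features of the cuts of the tree. -/
def cutFeats {α : Type} : DTree α → List α
  | leaf _ => []
  | node f _ l r => f :: (l.cutFeats ++ r.cutFeats)

end DTree

/-- The number of errors of `T` on the training data set `(E, lab)`. -/
noncomputable def errorCount {α ι : Type} [Fintype ι] (E : ι → α → ℝ)
    (lab : ι → Bool) (T : DTree α) : ℕ :=
  (Finset.univ.filter (fun i => T.classify (E i) ≠ lab i)).card

/-- `T'` has the same shape as `T` and the same feature at every cut; thresholds and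
leaf labels may differ. -/
def SameShapeFeat {α : Type} : DTree α → DTree α → Prop
  | DTree.leaf _, DTree.leaf _ => True
  | DTree.node f _ l r, DTree.node f' _ l' r' =>
      f = f' ∧ SameShapeFeat l l' ∧ SameShapeFeat r r'
  | _, _ => False

/-- The number of cuts at which the thresholds of the two (same-shaped) trees
differ. -/
noncomputable def adjCost {α : Type} : DTree α → DTree α → ℕ
  | DTree.node _ x l r, DTree.node _ x' l' r' =>
      (if x = x' then 0 else 1) + adjCost l l' + adjCost r r'
  | _, _ => 0

/-- The Threshold Adjustment instance `((E, lab), T, k, t)` is a yes-instance. -/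
def TAYes {α ι : Type} [Fintype ι] (E : ι → α → ℝ) (lab : ι → Bool)
    (T : DTree α) (k t : ℕ) : Prop :=
  ∃ T' : DTree α, SameShapeFeat T T' ∧ adjCost T T' ≤ k ∧ errorCount E lab T' ≤ t

/-- Replace the feature of every cut by a fresh feature (one fresh feature per cut,
indexed by the position of the cut); thresholds and leaf labels are unchanged.
`p` is the position of the current subtree. -/
def dupAux {α : Type} : DTree α → List Bool → DTree (α ⊕ List Bool)
  | DTree.leaf c, _ => DTree.leaf c
  | DTree.node _ x l r, p =>
      DTree.node (Sum.inr p) x (dupAux l (p ++ [false])) (dupAux r (p ++ [true]))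

/-- Extension of the example `e` to the enlarged feature set: old features keep their
values, and each fresh feature (the fresh copy introduced for the cut of `T` at
position `p`) receives the value of `e` at the original feature of that cut. -/
noncomputable def extendEx {α : Type} (T : DTree α) (e : α → ℝ) :
    α ⊕ List Bool → ℝ
  | Sum.inl a => e a
  | Sum.inr p => ((T.featAt p).map e).getD 0


section Aux

open DTree

/-- Pull back: keep features of the first tree, thresholds/labels of the second. -/
def pull {α : Type} : DTree α → DTree (α ⊕ List Bool) → DTree α
  | DTree.node f _ l r, DTree.node _ x' l' r' => DTree.node f x' (pull l l') (pull r r')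
  | _, DTree.leaf c => DTree.leaf c
  | t, _ => t

lemma mem_cutFeats_dupAux {α : Type} (S : DTree α) (p : List Bool) (x : α ⊕ List Bool)
    (h : x ∈ (dupAux S p).cutFeats) : ∃ q, x = Sum.inr (p ++ q) := by
  induction S generalizing p with
  | leaf c => simp [dupAux, DTree.cutFeats] at h
  | node f thr l r ihl ihr =>
    simp only [dupAux, DTree.cutFeats, List.mem_cons, List.mem_append] at h
    rcases h with h | h | h
    · exact ⟨[], by simp [h]⟩
    · obtain ⟨q, hq⟩ := ihl _ h
      exact ⟨false :: q, by simpa [List.append_assoc] using hq⟩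
    · obtain ⟨q, hq⟩ := ihr _ h
      exact ⟨true :: q, by simpa [List.append_assoc] using hq⟩

lemma nodup_cutFeats_dupAux {α : Type} (S : DTree α) (p : List Bool) :
    (dupAux S p).cutFeats.Nodup := by
  induction S generalizing p with
  | leaf c => simp [dupAux, DTree.cutFeats]
  | node f thr l r ihl ihr =>
    simp only [dupAux, DTree.cutFeats]
    refine List.nodup_cons.mpr ⟨?_, List.Nodup.append (ihl _) (ihr _) ?_⟩
    · intro h
      rcases List.mem_append.mp h with h | h
      · obtain ⟨q, hq⟩ := mem_cutFeats_dupAux _ _ _ h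
        have h2 := Sum.inr.inj hq
        have h3 : p.length = ((p ++ [false]) ++ q).length := by rw [← h2]
        simp at h3
      · obtain ⟨q, hq⟩ := mem_cutFeats_dupAux _ _ _ h
        have h2 := Sum.inr.inj hq
        have h3 : p.length = ((p ++ [true]) ++ q).length := by rw [← h2]
        simp at h3
    · intro x hx hy
      obtain ⟨q, hq⟩ := mem_cutFeats_dupAux _ _ _ hx
      obtain ⟨q', hq'⟩ := mem_cutFeats_dupAux _ _ _ hy
      rw [hq] at hq'
      have h2 := Sum.inr.inj hq'
      simp [List.append_assoc] at h2

lemma ssf_refl {α : Type} : ∀ S : DTree α, SameShapeFeat S S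
  | DTree.leaf _ => trivial
  | DTree.node f x l r => ⟨rfl, ssf_refl l, ssf_refl r⟩

lemma featAt_eq_of_ssf {α : Type} : ∀ (S S' : DTree α), SameShapeFeat S S' →
    ∀ q, S.featAt q = S'.featAt q := by
  intro S
  induction S with
  | leaf c => intro S' h q; cases S' with
    | leaf c' => rfl
    | node => exact h.elim
  | node f x l r ihl ihr =>
    intro S' h q
    cases S' with
    | leaf c' => exact h.elim
    | node f' x' l' r' =>
      obtain ⟨hf, hl, hr⟩ := h
      cases q with
      | nil => simp [DTree.featAt, hf]
      | cons b q => cases b <;> simp [DTree.featAt, ihl _ hl q, ihr _ hr q]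

lemma ssf_dupAux {α : Type} : ∀ (S S' : DTree α) (p : List Bool),
    SameShapeFeat S S' → SameShapeFeat (dupAux S p) (dupAux S' p) := by
  intro S
  induction S with
  | leaf c => intro S' p h; cases S' with
    | leaf c' => trivial
    | node => exact h.elim
  | node f x l r ihl ihr =>
    intro S' p h
    cases S' with
    | leaf c' => exact h.elim
    | node f' x' l' r' =>
      obtain ⟨hf, hl, hr⟩ := h
      exact ⟨rfl, ihl _ _ hl, ihr _ _ hr⟩

lemma pull_dupAux {α : Type} : ∀ (S : DTree α) (p : List Bool), pull S (dupAux S p) = S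
  | DTree.leaf c, p => rfl
  | DTree.node f x l r, p => by
      simp [dupAux, pull, pull_dupAux l, pull_dupAux r]

lemma ssf_pull {α : Type} : ∀ (S : DTree α) (T'' : DTree (α ⊕ List Bool)) (p : List Bool),
    SameShapeFeat (dupAux S p) T'' → SameShapeFeat S (pull S T'') := by
  intro S
  induction S with
  | leaf c => intro T'' p h; cases T'' with
    | leaf c' => trivial
    | node => exact h.elim
  | node f x l r ihl ihr =>
    intro T'' p h
    cases T'' with
    | leaf c' => exact h.elim
    | node f' x' l' r' =>
      obtain ⟨hf, hl, hr⟩ := h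
      exact ⟨rfl, ihl _ _ hl, ihr _ _ hr⟩

lemma adjCost_dupAux {α : Type} : ∀ (S S' : DTree α) (p p' : List Bool),
    adjCost (dupAux S p) (dupAux S' p') = adjCost S S' := by
  intro S
  induction S with
  | leaf c => intro S' p p'; cases S' <;> simp [dupAux, adjCost]
  | node f x l r ihl ihr =>
    intro S' p p'
    cases S' with
    | leaf c' => simp [dupAux, adjCost]
    | node f' x' l' r' => simp [dupAux, adjCost, ihl, ihr]

lemma adjCost_pull {α : Type} : ∀ (S : DTree α) (T'' : DTree (α ⊕ List Bool)) (p : List Bool),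
    SameShapeFeat (dupAux S p) T'' → adjCost S (pull S T'') = adjCost (dupAux S p) T'' := by
  intro S
  induction S with
  | leaf c => intro T'' p h; cases T'' with
    | leaf c' => rfl
    | node => exact h.elim
  | node f x l r ihl ihr =>
    intro T'' p h
    cases T'' with
    | leaf c' => exact h.elim
    | node f' x' l' r' =>
      obtain ⟨hf, hl, hr⟩ := h
      simp [pull, dupAux, adjCost, ihl _ _ hl, ihr _ _ hr]

lemma classify_pull {α : Type} : ∀ (S : DTree α) (T'' : DTree (α ⊕ List Bool))
    (p : List Bool) (g : α ⊕ List Bool → ℝ) (e : α → ℝ),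
    SameShapeFeat (dupAux S p) T'' →
    (∀ q f, S.featAt q = some f → g (Sum.inr (p ++ q)) = e f) →
    T''.classify g = (pull S T'').classify e := by
  intro S
  induction S with
  | leaf c => intro T'' p g e h hg; cases T'' with
    | leaf c' => rfl
    | node => exact h.elim
  | node f x l r ihl ihr =>
    intro T'' p g e h hg
    cases T'' with
    | leaf c' => exact h.elim
    | node f' x' l' r' =>
      obtain ⟨hf, hl, hr⟩ := h
      have hroot : g f' = e f := by
        rw [← hf]
        simpa using hg [] f rfl
      have hgl : ∀ q f₀, l.featAt q = some f₀ → g (Sum.inr ((p ++ [false]) ++ q)) = e f₀ := by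
        intro q f₀ hq
        have := hg (false :: q) f₀ (by simpa [DTree.featAt] using hq)
        simpa [List.append_assoc] using this
      have hgr : ∀ q f₀, r.featAt q = some f₀ → g (Sum.inr ((p ++ [true]) ++ q)) = e f₀ := by
        intro q f₀ hq
        have := hg (true :: q) f₀ (by simpa [DTree.featAt] using hq)
        simpa [List.append_assoc] using this
      simp only [pull, DTree.classify, hroot, ihl _ _ _ _ hl hgl, ihr _ _ _ _ hr hgr]

end Aux

/-- Replacing the feature of every cut of `T` with a fresh feature
(one fresh feature per occurrence) and extending every example so that each fresh
feature takes the value of the corresponding original feature yields a tree `T'` in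
which every feature occurs at most once as the feature of a cut, and the original
Threshold Adjustment instance is a yes-instance if and only if the new one is. -/

theorem stmt4 {α ι : Type} [Fintype ι] (E : ι → α → ℝ) (lab : ι → Bool)
    (T : DTree α) (k t : ℕ) :
    (dupAux T []).cutFeats.Nodup ∧
    (TAYes E lab T k t ↔
      TAYes (fun i => extendEx T (E i)) lab (dupAux T []) k t) := by
  constructor
  · exact nodup_cutFeats_dupAux T []
  · constructor
    · rintro ⟨T', hssf, hadj, herr⟩
      refine ⟨dupAux T' [], ssf_dupAux _ _ _ hssf, ?_, ?_⟩
      · rwa [adjCost_dupAux]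
      · have hclass : ∀ i, (dupAux T' []).classify (extendEx T (E i)) = T'.classify (E i) := by
          intro i
          have := classify_pull T' (dupAux T' []) [] (extendEx T (E i)) (E i)
            (ssf_dupAux _ _ _ (ssf_refl T'))
            (by
              intro q f hq
              have hT : T.featAt q = some f := by
                rw [featAt_eq_of_ssf T T' hssf]; exact hq
              simp [extendEx, hT])
          rw [this, pull_dupAux]
        calc errorCount (fun i => extendEx T (E i)) lab (dupAux T' [])
            = errorCount E lab T' := by
              unfold errorCount
              apply congrArg
              apply Finset.filter_congr
              intro i _
              simp [hclass i]
          _ ≤ t := herr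
    · rintro ⟨T'', hssf, hadj, herr⟩
      refine ⟨pull T T'', ssf_pull _ _ _ hssf, ?_, ?_⟩
      · rwa [adjCost_pull _ _ _ hssf]
      · have hclass : ∀ i, (pull T T'').classify (E i) = T''.classify (extendEx T (E i)) := by
          intro i
          exact (classify_pull T T'' [] (extendEx T (E i)) (E i) hssf
            (by intro q f hq; simp [extendEx, hq])).symm
        calc errorCount E lab (pull T T'')
            = errorCount (fun i => extendEx T (E i)) lab T'' := by
              unfold errorCount
              apply congrArg
              apply Finset.filter_congr
              intro i _
              simp [hclass i]
          _ ≤ t := herr
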